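/- Consistency score admits truthtelling as a best response: assume |A| ≥ 3 and all agents other than i report the observed signal ŝ. If agent i reports ŝ, her updated score is α + ((1−α)/k)·(1/|A|)/|A|, while if she reports any s ≠ ŝ it is α − (α/k)·(|A|−2)/|A|. For any α ∈ [0,1) and k ≥ 1, the former is strictly larger than the latter. -/
import Mathlib

/-- Consistency score admits truthtelling as a best response: with `|A| ≥ 3` agents and all
others truthful, the truthful update strictly exceeds the untruthful update. -/
theorem consistency_truthful_best_response (n : ℕ) (hn : 3 ≤ n) (α k : ℝ)
    (hα0 : 0 ≤ α) (hα1 : α < 1) (hk : 1 ≤ k) :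
    α - (α / k) * (((n : ℝ) - 2) / (n : ℝ))
      < α + ((1 - α) / k) * ((1 / (n : ℝ)) / (n : ℝ)) := by
  have hn' : (3 : ℝ) ≤ (n : ℝ) := by exact_mod_cast hn
  have hnpos : (0 : ℝ) < n := by linarith
  have hk0 : (0 : ℝ) < k := by linarith
  have hα : 0 < 1 - α := by linarith
  have h1 : 0 < ((1 - α) / k) * ((1 / (n : ℝ)) / (n : ℝ)) := by positivity
  have h2 : 0 ≤ (α / k) * (((n : ℝ) - 2) / (n : ℝ)) := by
    apply mul_nonneg (by positivity)
    apply div_nonneg (by linarith) (by linarith)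
  linarith
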